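/- Let (V,E) and (W,F) be Bratteli diagrams with embeddings ξ, ξ⁰, ξ¹ as specified. Fix n₀ ≥ 1 and l > n₀, and for i = 0,1 set Y^i_l = {x ∈ X_E : x_j ∈ ξ^i(F_j) for all j with n₀ < j ≤ l}. If μ is an R_E-invariant Borel probability measure on X_E, then μ(U(q) ∩ Y^i_l) ≤ 2^{n₀−l}·μ(U(q)) for every q ∈ E_{0,n₀} and i = 0,1; consequently μ(Y⁰_l) + μ(Y¹_l) ≤ 2^{1+n₀−l}. -/

import Mathlib

open MeasureTheory

structure Bratteli where
  V : ℕ → Type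
  E : ℕ → Type
  src : (n : ℕ) → E n → V n
  tgt : (n : ℕ) → E n → V (n + 1)
  V_finite : ∀ n, Finite (V n)
  V_nonempty : ∀ n, Nonempty (V n)
  V0_subsingleton : Subsingleton (V 0)
  E_finite : ∀ n, Finite (E n)
  E_nonempty : ∀ n, Nonempty (E n)

namespace Bratteli

variable (D : Bratteli)

instance (n : ℕ) : Finite (D.E n) := D.E_finite n
instance (n : ℕ) : Finite (D.V n) := D.V_finite n
instance (n : ℕ) : TopologicalSpace (D.E n) := ⊥
instance (n : ℕ) : DiscreteTopology (D.E n) := ⟨rfl⟩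

/-- The infinite path space `X_E`.  Coordinate `k` corresponds to the edge `x_{k+1}`
of the paper, lying in the edge set `E_{k+1}` (between vertex levels `k` and `k+1`). -/
def X : Type := { x : (n : ℕ) → D.E n // ∀ n, D.tgt n (x n) = D.src (n + 1) (x (n + 1)) }

instance : TopologicalSpace D.X :=
  inferInstanceAs (TopologicalSpace
    { x : (n : ℕ) → D.E n // ∀ n, D.tgt n (x n) = D.src (n + 1) (x (n + 1)) })

/-- `p` (a full choice of one edge at every level) is a finite path of length `n`
when restricted to its first `n` coordinates, i.e. coordinates `0,…,n-1` are
composable.  A path of length `n` represents an element of `E_{0,n}` of the paper. -/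
def IsPath (n : ℕ) (p : (k : ℕ) → D.E k) : Prop :=
  ∀ k, k + 1 < n → D.tgt k (p k) = D.src (k + 1) (p (k + 1))

/-- The cylinder set `U(p)` determined by the first `n` coordinates of `p`. -/
def cyl (n : ℕ) (p : (k : ℕ) → D.E k) : Set D.X :=
  { x | ∀ k, k < n → x.1 k = p k }

/-- The set `β_{p,q}` for `p, q ∈ E_{0,n}`. -/
def beta (n : ℕ) (p q : (k : ℕ) → D.E k) : Set (D.X × D.X) :=
  { z | (∀ k, k < n → z.1.1 k = p k ∧ z.2.1 k = q k) ∧ ∀ k, n ≤ k → z.1.1 k = z.2.1 k }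

/-- Tail equivalence `R_E`. -/
def RE : Set (D.X × D.X) :=
  ⋃ (n : ℕ) (p : (k : ℕ) → D.E k) (q : (k : ℕ) → D.E k)
    (_ : D.IsPath (n + 1) p) (_ : D.IsPath (n + 1) q)
    (_ : D.tgt n (p n) = D.tgt n (q n)), D.beta (n + 1) p q

instance : MeasurableSpace D.X := borel D.X

/-- A (Borel) measure `μ` is invariant for a relation `S ⊆ X × X` if for every
Borel subset `U ⊆ S` on which both coordinate projections are injective, the
images of `U` under the two projections have the same measure. -/
def Invariant (μ : Measure D.X) (S : Set (D.X × D.X)) : Prop :=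
  ∀ U : Set (D.X × D.X), U ⊆ S → MeasurableSet U →
    Set.InjOn Prod.fst U → Set.InjOn Prod.snd U →
    μ (Prod.fst '' U) = μ (Prod.snd '' U)

end Bratteli

/-- The inverse of a relation. -/
def relInv {α : Type*} (S : Set (α × α)) : Set (α × α) := { z | (z.2, z.1) ∈ S }

/-- Composition of relations: `S ∘ T = {(x,y) : ∃ z, (x,z) ∈ S, (z,y) ∈ T}`. -/
def relComp {α : Type*} (S T : Set (α × α)) : Set (α × α) :=
  { z | ∃ w, (z.1, w) ∈ S ∧ (w, z.2) ∈ T }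

/-- A pair of disjoint embeddings `ξ⁰, ξ¹` of a Bratteli diagram `(W,F)` (here `B`)
into a Bratteli diagram `(V,E)` (here `D`), over a common vertex embedding `ξ`. -/
structure BratteliEmb (B D : Bratteli) where
  xiV : (n : ℕ) → B.V n → D.V n
  xi0 : (n : ℕ) → B.E n → D.E n
  xi1 : (n : ℕ) → B.E n → D.E n
  xiV_inj : ∀ n, Function.Injective (xiV n)
  xi0_inj : ∀ n, Function.Injective (xi0 n)
  xi1_inj : ∀ n, Function.Injective (xi1 n)
  src_xi0 : ∀ n (f : B.E n), D.src n (xi0 n f) = xiV n (B.src n f)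
  tgt_xi0 : ∀ n (f : B.E n), D.tgt n (xi0 n f) = xiV (n + 1) (B.tgt n f)
  src_xi1 : ∀ n (f : B.E n), D.src n (xi1 n f) = xiV n (B.src n f)
  tgt_xi1 : ∀ n (f : B.E n), D.tgt n (xi1 n f) = xiV (n + 1) (B.tgt n f)
  disjoint01 : ∀ n (f g : B.E n), xi0 n f ≠ xi1 n g

namespace BratteliEmb

variable {B D : Bratteli} (E : BratteliEmb B D)

/-- The set `λ^{1,0}_{p,q}` for `(p,q) ∈ I_n^W` (paths of length `n+1`): pairs whose first
`n+1` coordinates are `p` resp. `q`, and whose remaining coordinates run through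
`ξ¹(f_k)` resp. `ξ⁰(f_k)` for a common infinite path `(f_k)` of `(W,F)`. -/
def lam (n : ℕ) (p q : (k : ℕ) → D.E k) : Set (D.X × D.X) :=
  { z | (∀ k, k < n + 1 → z.1.1 k = p k ∧ z.2.1 k = q k) ∧
        ∀ k, n + 1 ≤ k → ∃ f : B.E k, z.1.1 k = E.xi1 k f ∧ z.2.1 k = E.xi0 k f }

/-- The set `δ^{1,0}_{p,q}` for `(p,q) ∈ I_n^W`: the union of `λ^{1,0}_{p,q}` with the pairs
which, after a finite common block of `(ξ¹,ξ⁰)`-matched edges, either swap to a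
`(ξ⁰,ξ¹)`-matched edge and then agree, or meet a common edge outside
`ξ⁰(F) ∪ ξ¹(F)` and then agree. -/
def delta (n : ℕ) (p q : (k : ℕ) → D.E k) : Set (D.X × D.X) :=
  E.lam n p q ∪
  { z | (∀ k, k < n + 1 → z.1.1 k = p k ∧ z.2.1 k = q k) ∧
        ∃ m : ℕ,
          (∀ k, n + 1 ≤ k → k ≤ n + 1 + m →
            ∃ f : B.E k, z.1.1 k = E.xi1 k f ∧ z.2.1 k = E.xi0 k f) ∧
          (∃ f : B.E (n + m + 2), z.1.1 (n + m + 2) = E.xi0 (n + m + 2) f ∧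
            z.2.1 (n + m + 2) = E.xi1 (n + m + 2) f) ∧
          (∀ k, n + m + 2 < k → z.1.1 k = z.2.1 k) } ∪
  { z | (∀ k, k < n + 1 → z.1.1 k = p k ∧ z.2.1 k = q k) ∧
        ∃ m : ℕ,
          (∀ k, n + 1 ≤ k → k ≤ n + 1 + m →
            ∃ f : B.E k, z.1.1 k = E.xi1 k f ∧ z.2.1 k = E.xi0 k f) ∧
          (∀ f : B.E (n + m + 2), z.1.1 (n + m + 2) ≠ E.xi0 (n + m + 2) f ∧
            z.1.1 (n + m + 2) ≠ E.xi1 (n + m + 2) f) ∧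
          (∀ k, n + m + 2 ≤ k → z.1.1 k = z.2.1 k) }

/-- The equivalence relation `R`, generated by `R_E` together with all
`δ^{1,0}_{p,q}` and `δ^{0,1}_{q,p}` for `(p,q) ∈ I_n^W`, `n ≥ 1`. -/
def Rfull : Set (D.X × D.X) :=
  D.RE ∪
  ⋃ (n : ℕ) (p : (k : ℕ) → D.E k) (q : (k : ℕ) → D.E k)
    (_ : D.IsPath (n + 1) p) (_ : D.IsPath (n + 1) q)
    (_ : D.tgt n (p n) = D.tgt n (q n))
    (_ : ∃ w : B.V (n + 1), D.tgt n (p n) = E.xiV (n + 1) w),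
    (E.delta n p q ∪ relInv (E.delta n p q))

/-- The compact open subrelation `R_n` (`n+1` in the indexing of the paper). -/
def Rn (n : ℕ) : Set (D.X × D.X) :=
  (⋃ (p : (k : ℕ) → D.E k) (q : (k : ℕ) → D.E k)
    (_ : D.IsPath (n + 1) p) (_ : D.IsPath (n + 1) q)
    (_ : D.tgt n (p n) = D.tgt n (q n)), D.beta (n + 1) p q) ∪
  ⋃ (p : (k : ℕ) → D.E k) (q : (k : ℕ) → D.E k)
    (_ : D.IsPath (n + 1) p) (_ : D.IsPath (n + 1) q)
    (_ : D.tgt n (p n) = D.tgt n (q n))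
    (_ : ∃ w : B.V (n + 1), D.tgt n (p n) = E.xiV (n + 1) w),
    (E.delta n p q ∪ relInv (E.delta n p q))

end BratteliEmb

namespace BratteliEmb

variable {B D : Bratteli} (E : BratteliEmb B D)

/-- `Y⁰_l = {x ∈ X_E : x_j ∈ ξ⁰(F_j) for all n₀ < j ≤ l}` (coordinates `n₀+1,…,l`). -/
def Y0 (n0 l : ℕ) : Set D.X :=
  { x | ∀ k, n0 + 1 ≤ k → k ≤ l → ∃ f : B.E k, x.1 k = E.xi0 k f }

/-- `Y¹_l = {x ∈ X_E : x_j ∈ ξ¹(F_j) for all n₀ < j ≤ l}` (coordinates `n₀+1,…,l`). -/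
def Y1 (n0 l : ℕ) : Set D.X :=
  { x | ∀ k, n0 + 1 ≤ k → k ≤ l → ∃ f : B.E k, x.1 k = E.xi1 k f }

end BratteliEmb

/-!
Changing finitely many edges of paths while keeping every vertex fixed is a homeomorphism of
`X_E` whose graph lies in `R_E`, so it preserves every `R_E`-invariant measure. Since `ξ⁰` and
`ξ¹` lie over the same vertex map, swapping `ξ⁰(f) ↔ ξ¹(f)` at the levels of any
`S ⊆ {n₀+1, …, l}` is such a change. Pulling `U(q) ∩ Y⁰_l` back along these `2^{l-n₀}` swaps
gives sets of equal measure inside `U(q)`, pairwise disjoint because `S` is recovered as the set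
of levels carrying `ξ¹`-edges. Summing over the cylinders of length `n₀ + 1` bounds `μ(Y⁰_l)`,
and symmetrically `μ(Y¹_l)`.
-/

open Set Function MeasureTheory

section SwapRanges

variable {α β : Type*}

open Classical in
noncomputable def swapRanges (a b : β → α) (e : α) : α :=
  if h : ∃ f, a f = e then b h.choose
  else if h' : ∃ f, b f = e then a h'.choose
  else e

variable {a b : β → α}

theorem swapRanges_apply_left (ha : Injective a) (f : β) : swapRanges a b (a f) = b f := by
  have h : ∃ g, a g = a f := ⟨f, rfl⟩
  rw [swapRanges, dif_pos h, ha h.choose_spec]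

theorem swapRanges_apply_right (hb : Injective b) (hab : ∀ f g, a f ≠ b g) (f : β) :
    swapRanges a b (b f) = a f := by
  have h : ¬∃ g, a g = b f := fun ⟨g, hg⟩ => hab g f hg
  have h' : ∃ g, b g = b f := ⟨f, rfl⟩
  rw [swapRanges, dif_neg h, dif_pos h', hb h'.choose_spec]

theorem swapRanges_of_notMem {e : α} (ha : e ∉ range a) (hb : e ∉ range b) :
    swapRanges a b e = e :=
  (dif_neg ha).trans (dif_neg hb)

theorem swapRanges_involutive (ha : Injective a) (hb : Injective b) (hab : ∀ f g, a f ≠ b g) :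
    Involutive (swapRanges a b) := by
  intro e
  by_cases hea : e ∈ range a
  · obtain ⟨f, rfl⟩ := hea
    rw [swapRanges_apply_left ha, swapRanges_apply_right hb hab]
  by_cases heb : e ∈ range b
  · obtain ⟨f, rfl⟩ := heb
    rw [swapRanges_apply_right hb hab, swapRanges_apply_left ha]
  rw [swapRanges_of_notMem hea heb, swapRanges_of_notMem hea heb]

theorem comp_swapRanges {γ : Type*} (ha : Injective a) (hb : Injective b)
    (hab : ∀ f g, a f ≠ b g) (φ : α → γ) (hφ : ∀ f, φ (a f) = φ (b f)) (e : α) :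
    φ (swapRanges a b e) = φ e := by
  by_cases hea : e ∈ range a
  · obtain ⟨f, rfl⟩ := hea
    rw [swapRanges_apply_left ha, hφ]
  by_cases heb : e ∈ range b
  · obtain ⟨f, rfl⟩ := heb
    rw [swapRanges_apply_right hb hab, hφ]
  rw [swapRanges_of_notMem hea heb]

theorem swapRanges_mem_range_left_iff (ha : Injective a) (hb : Injective b)
    (hab : ∀ f g, a f ≠ b g) {e : α} : swapRanges a b e ∈ range a ↔ e ∈ range b := by
  constructor
  · rintro ⟨f, hf⟩
    refine ⟨f, ?_⟩
    rw [← swapRanges_apply_left (b := b) ha, hf, swapRanges_involutive ha hb hab]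
  · rintro ⟨f, rfl⟩
    exact ⟨f, (swapRanges_apply_right hb hab f).symm⟩

end SwapRanges

theorem MeasureTheory.measure_le_mul_measure_univ_of_fiberwise {Ω τ : Type*}
    [MeasurableSpace Ω] [Countable τ] {μ : Measure Ω} {π : Ω → τ}
    (hπ : ∀ t, MeasurableSet (π ⁻¹' {t})) {Y : Set Ω} {c : ENNReal}
    (h : ∀ t, μ (Y ∩ π ⁻¹' {t}) ≤ c * μ (π ⁻¹' {t})) :
    μ Y ≤ c * μ univ := by
  have hcover : ⋃ t, π ⁻¹' {t} = univ := by
    rw [← preimage_iUnion, iUnion_of_singleton, preimage_univ]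
  calc μ Y = μ (⋃ t, Y ∩ π ⁻¹' {t}) := by rw [← inter_iUnion, hcover, inter_univ]
    _ ≤ ∑' t, μ (Y ∩ π ⁻¹' {t}) := measure_iUnion_le _
    _ ≤ ∑' t, c * μ (π ⁻¹' {t}) := ENNReal.tsum_le_tsum h
    _ = c * μ univ := by
      rw [ENNReal.tsum_mul_left, ← measure_iUnion (pairwise_disjoint_fiber π) hπ, hcover]

theorem ENNReal.le_two_zpow_sub_mul {a b : ENNReal} {m n : ℕ} (h : 2 ^ (n - m) * a ≤ b) :
    a ≤ 2 ^ ((m : ℤ) - n) * b :=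
  calc a ≤ b / 2 ^ (n - m) := by
        rw [ENNReal.le_div_iff_mul_le (by simp) (by simp), mul_comm]; exact h
    _ = 2 ^ (-((n - m : ℕ) : ℤ)) * b := by
        rw [ENNReal.div_eq_inv_mul, ENNReal.zpow_neg, zpow_natCast]
    _ ≤ 2 ^ ((m : ℤ) - n) * b := by gcongr; exacts [one_le_two, by omega]

namespace Bratteli

variable {D : Bratteli}

instance : T2Space D.X :=
  inferInstanceAs (T2Space
    { x : (n : ℕ) → D.E n // ∀ n, D.tgt n (x n) = D.src (n + 1) (x (n + 1)) })

instance : SecondCountableTopology D.X :=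
  Topology.IsEmbedding.secondCountableTopology (Topology.IsEmbedding.subtypeVal
    (p := fun x : (n : ℕ) → D.E n => ∀ n, D.tgt n (x n) = D.src (n + 1) (x (n + 1))))

instance : BorelSpace D.X := ⟨rfl⟩

theorem continuous_coord (k : ℕ) : Continuous fun x : D.X => x.1 k :=
  (continuous_apply k).comp continuous_subtype_val

theorem isOpen_setOf_forall_coord_mem (s : Finset ℕ) (t : ∀ k, Set (D.E k)) :
    IsOpen {x : D.X | ∀ k ∈ s, x.1 k ∈ t k} := by
  simp only [ofPred_forall]
  exact isOpen_biInter_finset fun k _ => (isOpen_discrete (t k)).preimage (continuous_coord k)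

theorem cyl_eq (n : ℕ) (q : (k : ℕ) → D.E k) :
    D.cyl n q = {x : D.X | ∀ k ∈ Finset.range n, x.1 k ∈ ({q k} : Set (D.E k))} := by
  ext x
  simp [cyl]

theorem measurableSet_cyl (n : ℕ) (q : (k : ℕ) → D.E k) : MeasurableSet (D.cyl n q) := by
  rw [cyl_eq]
  exact (isOpen_setOf_forall_coord_mem _ _).measurableSet

/-- The common vertex at level `n + 1` required by `R_E` is the source of the common edge at
level `n + 1`. -/
theorem mk_mem_RE_of_tail_eq {x y : D.X} (n : ℕ) (h : ∀ k, n < k → x.1 k = y.1 k) :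
    (x, y) ∈ D.RE := by
  have hvertex : D.tgt n (x.1 n) = D.tgt n (y.1 n) := by
    rw [x.2 n, y.2 n, h (n + 1) n.lt_succ_self]
  simp only [RE, mem_iUnion]
  exact ⟨n, x.1, y.1, fun k _ => x.2 k, fun k _ => y.2 k, hvertex,
    fun k _ => ⟨rfl, rfl⟩, h⟩

theorem Invariant.measure_preimage_eq {μ : Measure D.X} {S : Set (D.X × D.X)}
    (hμ : D.Invariant μ S) {T : D.X → D.X} (hT : Continuous T) (hTb : Bijective T)
    (hTS : ∀ x, (x, T x) ∈ S) {A : Set D.X} (hA : MeasurableSet A) :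
    μ (T ⁻¹' A) = μ A := by
  set U : Set (D.X × D.X) := {z | z.1 ∈ T ⁻¹' A ∧ z.2 = T z.1}
  have hU : U = (fun x => (x, T x)) '' (T ⁻¹' A) := by
    ext ⟨x, y⟩
    simp only [U, mem_ofPred_eq, mem_image, Prod.mk.injEq]
    constructor
    · rintro ⟨hx, rfl⟩
      exact ⟨x, hx, rfl, rfl⟩
    · rintro ⟨x, hx, rfl, rfl⟩
      exact ⟨hx, rfl⟩
  have hUm : MeasurableSet U :=
    (measurable_fst (hT.measurable hA)).inter
      (isClosed_eq continuous_snd (hT.comp continuous_fst)).measurableSet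
  have hfst : Prod.fst '' U = T ⁻¹' A := by
    rw [hU, image_image, image_id']
  have hsnd : Prod.snd '' U = A := by
    rw [hU, image_image, image_preimage_eq A hTb.surjective]
  have hinjfst : InjOn Prod.fst U := by
    rintro ⟨x, y⟩ ⟨-, hy⟩ ⟨x', y'⟩ ⟨-, hy'⟩ (rfl : x = x')
    simp only at hy hy'
    rw [hy, hy']
  have hinjsnd : InjOn Prod.snd U := by
    rintro ⟨x, y⟩ ⟨-, hy⟩ ⟨x', y'⟩ ⟨-, hy'⟩ (rfl : y = y')
    simp only at hy hy'
    rw [hTb.injective (hy.symm.trans hy')]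
  have hUS : U ⊆ S := by
    rintro ⟨x, y⟩ ⟨-, hy⟩
    simp only at hy
    exact hy ▸ hTS x
  rw [← hfst, ← hsnd, hμ U hUS hUm hinjfst hinjsnd]

theorem measure_le_mul_measure_univ_of_forall_cyl {μ : Measure D.X} {Y : Set D.X}
    {c : ENNReal} (n : ℕ) (h : ∀ q, μ (D.cyl n q ∩ Y) ≤ c * μ (D.cyl n q)) : μ Y ≤ c * μ univ := by
  set π : D.X → (k : Fin n) → D.E k := fun x k => x.1 k
  have hfiber : ∀ x, π ⁻¹' {π x} = D.cyl n x.1 := by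
    intro x
    ext y
    simp [π, cyl, funext_iff, Fin.forall_iff]
  have hπ : Continuous π := continuous_pi fun k => continuous_coord (k : ℕ)
  refine measure_le_mul_measure_univ_of_fiberwise
    (fun t => ((isOpen_discrete {t}).preimage hπ).measurableSet) fun t => ?_
  rcases (π ⁻¹' {t}).eq_empty_or_nonempty with hempty | ⟨x, rfl : π x = t⟩
  · simp [hempty]
  · rw [hfiber, inter_comm]
    exact h x.1

end Bratteli

namespace BratteliEmb

variable {B D : Bratteli} (E : BratteliEmb B D)

/-- `E.symm.Y0` is definitionally `E.Y1`, which reduces every statement about `Y¹` to `Y⁰`. -/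
def symm : BratteliEmb B D where
  xiV := E.xiV
  xi0 := E.xi1
  xi1 := E.xi0
  xiV_inj := E.xiV_inj
  xi0_inj := E.xi1_inj
  xi1_inj := E.xi0_inj
  src_xi0 := E.src_xi1
  tgt_xi0 := E.tgt_xi1
  src_xi1 := E.src_xi0
  tgt_xi1 := E.tgt_xi0
  disjoint01 n f g h := E.disjoint01 n g f h.symm

theorem Y0_eq (n0 l : ℕ) :
    E.Y0 n0 l = {x : D.X | ∀ k ∈ Finset.Icc (n0 + 1) l, x.1 k ∈ range (E.xi0 k)} := by
  ext x
  simp [Y0, eq_comm, and_imp]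

theorem measurableSet_Y0 (n0 l : ℕ) : MeasurableSet (E.Y0 n0 l) := by
  rw [Y0_eq]
  exact (Bratteli.isOpen_setOf_forall_coord_mem _ _).measurableSet

noncomputable def swapEdge (k : ℕ) : D.E k → D.E k :=
  swapRanges (E.xi0 k) (E.xi1 k)

theorem swapEdge_involutive (k : ℕ) : Involutive (E.swapEdge k) :=
  swapRanges_involutive (E.xi0_inj k) (E.xi1_inj k) (E.disjoint01 k)

theorem src_swapEdge (k : ℕ) (e : D.E k) : D.src k (E.swapEdge k e) = D.src k e :=
  comp_swapRanges (E.xi0_inj k) (E.xi1_inj k) (E.disjoint01 k) _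
    (fun f => by rw [E.src_xi0, E.src_xi1]) e

theorem tgt_swapEdge (k : ℕ) (e : D.E k) : D.tgt k (E.swapEdge k e) = D.tgt k e :=
  comp_swapRanges (E.xi0_inj k) (E.xi1_inj k) (E.disjoint01 k) _
    (fun f => by rw [E.tgt_xi0, E.tgt_xi1]) e

theorem swapEdge_mem_range_xi0_iff (k : ℕ) (e : D.E k) :
    E.swapEdge k e ∈ range (E.xi0 k) ↔ e ∈ range (E.xi1 k) :=
  swapRanges_mem_range_left_iff (E.xi0_inj k) (E.xi1_inj k) (E.disjoint01 k)

noncomputable def swapAt (S : Finset ℕ) (x : D.X) : D.X :=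
  ⟨fun k => if k ∈ S then E.swapEdge k (x.1 k) else x.1 k, fun n => by
    have hsrc : D.src (n + 1) (if n + 1 ∈ S then E.swapEdge (n + 1) (x.1 (n + 1))
        else x.1 (n + 1)) = D.src (n + 1) (x.1 (n + 1)) := by
      split_ifs <;> simp only [src_swapEdge]
    have htgt : D.tgt n (if n ∈ S then E.swapEdge n (x.1 n) else x.1 n) = D.tgt n (x.1 n) := by
      split_ifs <;> simp only [tgt_swapEdge]
    rw [hsrc, htgt, x.2 n]⟩

theorem swapAt_apply_of_mem {S : Finset ℕ} {k : ℕ} (hk : k ∈ S) (x : D.X) :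
    (E.swapAt S x).1 k = E.swapEdge k (x.1 k) :=
  if_pos hk

theorem swapAt_apply_of_notMem {S : Finset ℕ} {k : ℕ} (hk : k ∉ S) (x : D.X) :
    (E.swapAt S x).1 k = x.1 k :=
  if_neg hk

theorem swapAt_involutive (S : Finset ℕ) : Involutive (E.swapAt S) := by
  intro x
  refine Subtype.ext (funext fun k => ?_)
  by_cases hk : k ∈ S
  · rw [swapAt_apply_of_mem _ hk, swapAt_apply_of_mem _ hk, swapEdge_involutive]
  · rw [swapAt_apply_of_notMem _ hk, swapAt_apply_of_notMem _ hk]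

theorem continuous_swapAt (S : Finset ℕ) : Continuous (E.swapAt S) :=
  (continuous_pi fun k => (continuous_of_discreteTopology
    (f := fun e : D.E k => if k ∈ S then E.swapEdge k e else e)).comp
      (Bratteli.continuous_coord k)).subtype_mk _

theorem measure_preimage_swapAt {μ : Measure D.X} (hμ : D.Invariant μ D.RE) (S : Finset ℕ)
    {A : Set D.X} (hA : MeasurableSet A) : μ (E.swapAt S ⁻¹' A) = μ A :=
  hμ.measure_preimage_eq (E.continuous_swapAt S) (E.swapAt_involutive S).bijective
    (fun x => Bratteli.mk_mem_RE_of_tail_eq (S.sup id) fun _ hk =>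
      (E.swapAt_apply_of_notMem (fun hkS => hk.not_ge (S.le_sup (f := id) hkS)) x).symm)
    hA

open Classical in
theorem eq_filter_of_swapAt_mem_Y0 {n0 l : ℕ} {S : Finset ℕ} (hS : S ⊆ Finset.Icc (n0 + 1) l)
    {x : D.X} (hx : E.swapAt S x ∈ E.Y0 n0 l) :
    S = (Finset.Icc (n0 + 1) l).filter fun k => x.1 k ∈ range (E.xi1 k) := by
  rw [Y0_eq] at hx
  ext k
  rw [Finset.mem_filter]
  by_cases hk : k ∈ S
  · have hx0 := hx k (hS hk)
    rw [swapAt_apply_of_mem _ hk, swapEdge_mem_range_xi0_iff] at hx0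
    exact ⟨fun _ => ⟨hS hk, hx0⟩, fun _ => hk⟩
  · refine ⟨fun h => absurd h hk, fun ⟨hkI, ⟨f, hf⟩⟩ => ?_⟩
    obtain ⟨g, hg⟩ := hx k hkI
    rw [swapAt_apply_of_notMem _ hk, ← hf] at hg
    exact absurd hg (E.disjoint01 k g f)

theorem two_pow_mul_measure_cyl_inter_Y0_le {μ : Measure D.X} (hμ : D.Invariant μ D.RE)
    (n0 l : ℕ) (q : (k : ℕ) → D.E k) :
    2 ^ (l - n0) * μ (D.cyl (n0 + 1) q ∩ E.Y0 n0 l) ≤ μ (D.cyl (n0 + 1) q) := by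
  set I := Finset.Icc (n0 + 1) l
  set A := D.cyl (n0 + 1) q ∩ E.Y0 n0 l
  have hA : MeasurableSet A := (Bratteli.measurableSet_cyl _ _).inter (E.measurableSet_Y0 _ _)
  have hdisj : (I.powerset : Set (Finset ℕ)).PairwiseDisjoint fun S => E.swapAt S ⁻¹' A := by
    intro S hS S' hS' hne
    refine disjoint_left.2 fun x hx hx' => hne ?_
    rw [E.eq_filter_of_swapAt_mem_Y0 (Finset.mem_powerset.1 hS) hx.2,
      E.eq_filter_of_swapAt_mem_Y0 (Finset.mem_powerset.1 hS') hx'.2]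
  have hcyl : ∀ S ∈ I.powerset, E.swapAt S ⁻¹' A ⊆ D.cyl (n0 + 1) q := by
    intro S hS x hx k hk
    have hkS : k ∉ S := fun hkS => by
      have := Finset.mem_Icc.1 (Finset.mem_powerset.1 hS hkS)
      omega
    rw [← hx.1 k hk, swapAt_apply_of_notMem _ hkS]
  calc 2 ^ (l - n0) * μ A = ∑ S ∈ I.powerset, μ (E.swapAt S ⁻¹' A) := by
        rw [Finset.sum_congr rfl fun S _ => E.measure_preimage_swapAt hμ S hA, Finset.sum_const,
          Finset.card_powerset, Nat.card_Icc, nsmul_eq_mul, Nat.cast_pow, Nat.cast_ofNat,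
          Nat.add_sub_add_right]
    _ = μ (⋃ S ∈ I.powerset, E.swapAt S ⁻¹' A) :=
        (measure_biUnion_finset hdisj fun S _ => (E.continuous_swapAt S).measurable hA).symm
    _ ≤ μ (D.cyl (n0 + 1) q) := measure_mono (iUnion₂_subset hcyl)

theorem measure_cyl_inter_Y0_le {μ : Measure D.X} (hμ : D.Invariant μ D.RE) (n0 l : ℕ)
    (q : (k : ℕ) → D.E k) :
    μ (D.cyl (n0 + 1) q ∩ E.Y0 n0 l) ≤ 2 ^ ((n0 : ℤ) - l) * μ (D.cyl (n0 + 1) q) :=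
  ENNReal.le_two_zpow_sub_mul (E.two_pow_mul_measure_cyl_inter_Y0_le hμ n0 l q)

end BratteliEmb

theorem stmt18_general (B D : Bratteli) (E : BratteliEmb B D) (n0 l : ℕ)
    (μ : Measure D.X) [IsProbabilityMeasure μ] (hinv : D.Invariant μ D.RE) :
    (∀ q : (k : ℕ) → D.E k, D.IsPath (n0 + 1) q →
      μ (D.cyl (n0 + 1) q ∩ E.Y0 n0 l) ≤ (2 : ENNReal) ^ ((n0 : ℤ) - l) * μ (D.cyl (n0 + 1) q) ∧
      μ (D.cyl (n0 + 1) q ∩ E.Y1 n0 l) ≤ (2 : ENNReal) ^ ((n0 : ℤ) - l) * μ (D.cyl (n0 + 1) q)) ∧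
    μ (E.Y0 n0 l) + μ (E.Y1 n0 l) ≤ (2 : ENNReal) ^ (1 + (n0 : ℤ) - l) := by
  have hY0 := E.measure_cyl_inter_Y0_le hinv n0 l
  have hY1 := E.symm.measure_cyl_inter_Y0_le hinv n0 l
  refine ⟨fun q _ => ⟨hY0 q, hY1 q⟩, ?_⟩
  have h0 := D.measure_le_mul_measure_univ_of_forall_cyl (n0 + 1) hY0
  have h1 := D.measure_le_mul_measure_univ_of_forall_cyl (n0 + 1) hY1
  rw [measure_univ, mul_one] at h0 h1
  calc μ (E.Y0 n0 l) + μ (E.Y1 n0 l) ≤ 2 ^ ((n0 : ℤ) - l) + 2 ^ ((n0 : ℤ) - l) :=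
        add_le_add h0 h1
    _ = 2 ^ (1 + (n0 : ℤ) - l) := by
      rw [← two_mul, add_sub_assoc, ENNReal.zpow_add two_ne_zero ENNReal.ofNat_ne_top, zpow_one]

open MeasureTheory in
/-- For `l > n₀` and `μ` an `R_E`-invariant Borel probability measure:
`μ(U(q) ∩ Y^i_l) ≤ 2^{n₀−l}·μ(U(q))` for every `q ∈ E_{0,n₀}` and `i = 0,1`, and
consequently `μ(Y⁰_l) + μ(Y¹_l) ≤ 2^{1+n₀−l}`. -/
theorem stmt18 (B D : Bratteli) (E : BratteliEmb B D) (n0 l : ℕ) (hl : n0 < l)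
    (μ : Measure D.X) [IsProbabilityMeasure μ] (hinv : D.Invariant μ D.RE) :
    (∀ q : (k : ℕ) → D.E k, D.IsPath (n0 + 1) q →
      μ (D.cyl (n0 + 1) q ∩ E.Y0 n0 l) ≤ (2 : ENNReal) ^ ((n0 : ℤ) - l) * μ (D.cyl (n0 + 1) q) ∧
      μ (D.cyl (n0 + 1) q ∩ E.Y1 n0 l) ≤ (2 : ENNReal) ^ ((n0 : ℤ) - l) * μ (D.cyl (n0 + 1) q)) ∧
    μ (E.Y0 n0 l) + μ (E.Y1 n0 l) ≤ (2 : ENNReal) ^ (1 + (n0 : ℤ) - l) :=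
  stmt18_general B D E n0 l μ hinv
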